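/- Over the max-plus semifield, for an n×n matrix A with spectral radius λ > -∞, every vector of the form x = (λ^{-1} A)* u with u regular achieves x⁻ A x = λ; that is, the minimum of x⁻ A x over regular vectors x equals λ and is attained on all such vectors. -/

import Mathlib

/-- Max-plus matrix–vector product: `(A x)_i = max_j (a_{ij} + x_j)`. -/
noncomputable def mpMulVec {n : ℕ} (A : Fin n → Fin n → EReal) (x : Fin n → EReal) :
    Fin n → EReal :=
  fun i => Finset.univ.sup fun j => A i j + x j

/-- Max-plus matrix product. -/
noncomputable def mpMul {n : ℕ} (A B : Fin n → Fin n → EReal) :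
    Fin n → Fin n → EReal :=
  fun i j => Finset.univ.sup fun k => A i k + B k j

/-- Max-plus identity matrix: `0` on the diagonal and `-∞` elsewhere. -/
noncomputable def mpId {n : ℕ} : Fin n → Fin n → EReal :=
  fun i j => if i = j then 0 else ⊥

/-- Max-plus matrix power. -/
noncomputable def mpPow {n : ℕ} (A : Fin n → Fin n → EReal) : ℕ → (Fin n → Fin n → EReal)
  | 0 => mpId
  | k + 1 => mpMul (mpPow A k) A

/-- Max-plus trace: maximum of the diagonal entries. -/
noncomputable def mpTrace {n : ℕ} (A : Fin n → Fin n → EReal) : EReal :=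
  Finset.univ.sup fun i => A i i

/-- `Tr(A) = tr A ⊕ tr A² ⊕ ⋯ ⊕ tr Aⁿ`. -/
noncomputable def mpTr {n : ℕ} (A : Fin n → Fin n → EReal) : EReal :=
  (Finset.Icc 1 n).sup fun k => mpTrace (mpPow A k)

/-- The Kleene star `A* = I ⊕ A ⊕ ⋯ ⊕ A^{n-1}`. -/
noncomputable def mpStar {n : ℕ} (A : Fin n → Fin n → EReal) :
    Fin n → Fin n → EReal :=
  fun i j => (Finset.range n).sup fun k => mpPow A k i j

/-!
Put `B = λ⁻¹ A`. The trace conditions say that every cycle of length at most `n` has `B`-weight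
at most `0`, so a walk of length at least `n` can be shortened, without losing weight, by cutting
out a cycle. Hence every power of `B` is dominated by `B*`, so `B B* ≤ B*` and `x = B* u` satisfies
`B x ≤ x`, which is `x⁻ A x ≤ λ`. Conversely, `y⁻ A y ≤ c` for a regular `y` bounds every diagonal
entry of `A^k` by `k c`, and the power whose trace is `k λ` forces `λ ≤ c`.
-/

open Finset

namespace EReal

theorem finset_sup_add {ι : Type*} (s : Finset ι) (f : ι → EReal) (c : EReal) :
    s.sup f + c = s.sup fun i => f i + c :=
  apply_sup_eq_sup_comp_of_linearOrder (· + c) (fun _ _ h => add_le_add_left h c) (bot_add c)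

theorem add_finset_sup {ι : Type*} (s : Finset ι) (f : ι → EReal) (c : EReal) :
    c + s.sup f = s.sup fun i => c + f i := by
  simpa only [add_comm c] using finset_sup_add s f c

theorem add_coe_add_coe_le_coe_iff (x : EReal) (a b c : ℝ) :
    x + a + b ≤ c ↔ x ≤ ((c - a - b : ℝ) : EReal) := by
  induction x using EReal.rec with
  | bot => simp
  | top => simp [-EReal.coe_sub]
  | coe x => norm_cast; constructor <;> intro h <;> linarith

end EReal

section MaxPlus

variable {n : ℕ}

theorem mpPow_one (B : Fin n → Fin n → EReal) : mpPow B 1 = B := by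
  funext i j
  change (univ.sup fun k => mpId i k + B k j) = B i j
  apply le_antisymm
  · refine Finset.sup_le fun k _ => ?_
    by_cases h : i = k <;> simp [mpId, h]
  · simpa [mpId] using le_sup (f := fun k => mpId i k + B k j) (mem_univ i)

theorem mpPow_apply_add_mpPow_apply_le (B : Fin n → Fin n → EReal) (s r : ℕ) (i v j : Fin n) :
    mpPow B s i v + mpPow B r v j ≤ mpPow B (s + r) i j := by
  induction r generalizing j with
  | zero =>
    by_cases h : v = j <;> simp [mpPow, mpId, h]
  | succ r ih =>
    change _ + (univ.sup fun m => mpPow B r v m + B m j) ≤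
      univ.sup fun m => mpPow B (s + r) i m + B m j
    rw [EReal.add_finset_sup]
    refine Finset.sup_le fun m hm => Finset.le_sup_of_le hm ?_
    rw [← add_assoc]
    gcongr
    exact ih m

theorem mpPow_ne_top {B : Fin n → Fin n → EReal} (hB : ∀ i j, B i j ≠ ⊤) (k : ℕ) (i j : Fin n) :
    mpPow B k i j ≠ ⊤ := by
  induction k generalizing j with
  | zero => by_cases h : i = j <;> simp [mpPow, mpId, h]
  | succ k ih =>
    change (univ.sup fun m => mpPow B k i m + B m j) ≠ ⊤
    exact ((Finset.sup_lt_iff bot_lt_top).2 fun m _ => EReal.add_lt_top (ih m) (hB m j)).ne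

theorem mpPow_add_const (A : Fin n → Fin n → EReal) (c : ℝ) (k : ℕ) (i j : Fin n) :
    mpPow (fun i j => A i j + c) k i j = mpPow A k i j + ((k * c : ℝ) : EReal) := by
  induction k generalizing j with
  | zero => by_cases h : i = j <;> simp [mpPow, mpId, h]
  | succ k ih =>
    change (univ.sup fun m => _ + (A m j + c)) = (univ.sup fun m => mpPow A k i m + A m j) + _
    rw [EReal.finset_sup_add]
    refine sup_congr rfl fun m _ => ?_
    rw [ih, add_add_add_comm, ← EReal.coe_add, Nat.cast_succ, add_one_mul]

theorem mpTrace_mpPow_add_const (A : Fin n → Fin n → EReal) (c : ℝ) (k : ℕ) :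
    mpTrace (mpPow (fun i j => A i j + c) k) = mpTrace (mpPow A k) + ((k * c : ℝ) : EReal) := by
  simp only [mpTrace, mpPow_add_const, EReal.finset_sup_add]

theorem exists_lt_le_apply_eq (p : ℕ → Fin n) : ∃ s t, s < t ∧ t ≤ n ∧ p s = p t := by
  obtain ⟨a, b, hab, heq⟩ :=
    Fintype.exists_ne_map_eq_of_card_lt (fun m : Fin (n + 1) => p m) (by simp)
  rcases lt_or_gt_of_ne (Fin.val_ne_of_ne hab) with h | h
  · exact ⟨a, b, h, Nat.lt_succ_iff.1 b.isLt, heq⟩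
  · exact ⟨b, a, h, Nat.lt_succ_iff.1 a.isLt, heq.symm⟩

noncomputable def walkWeight (B : Fin n → Fin n → EReal) (p : ℕ → Fin n) (a b : ℕ) : EReal :=
  ∑ t ∈ Ico a b, B (p t) (p (t + 1))

theorem walkWeight_add (B : Fin n → Fin n → EReal) (p : ℕ → Fin n) {a b c : ℕ}
    (hab : a ≤ b) (hbc : b ≤ c) :
    walkWeight B p a b + walkWeight B p b c = walkWeight B p a c :=
  sum_Ico_consecutive _ hab hbc

theorem walkWeight_succ (B : Fin n → Fin n → EReal) (p : ℕ → Fin n) {a b : ℕ} (hab : a ≤ b) :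
    walkWeight B p a (b + 1) = walkWeight B p a b + B (p b) (p (b + 1)) :=
  sum_Ico_succ_top hab _

theorem walkWeight_le_mpPow (B : Fin n → Fin n → EReal) (p : ℕ → Fin n) {a b : ℕ} (hab : a ≤ b) :
    walkWeight B p a b ≤ mpPow B (b - a) (p a) (p b) := by
  induction b, hab using Nat.le_induction with
  | base => simp [walkWeight, mpPow, mpId]
  | succ b hab ih =>
    rw [walkWeight_succ B p hab, Nat.sub_add_comm hab]
    exact (add_le_add_left ih _).trans
      (le_sup (f := fun m => mpPow B (b - a) (p a) m + B m (p (b + 1))) (mem_univ (p b)))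

theorem exists_walkWeight_eq_mpPow (B : Fin n → Fin n → EReal) (k : ℕ) (i j : Fin n) :
    ∃ p : ℕ → Fin n, p 0 = i ∧ p (k + 1) = j ∧ walkWeight B p 0 (k + 1) = mpPow B (k + 1) i j := by
  induction k generalizing j with
  | zero =>
    refine ⟨fun t => if t = 0 then i else j, rfl, rfl, ?_⟩
    simp [walkWeight, mpPow_one]
  | succ k ih =>
    obtain ⟨m, -, hm⟩ := exists_mem_eq_sup univ ⟨j, mem_univ j⟩ fun m => mpPow B (k + 1) i m + B m j
    obtain ⟨p, hp0, hpk, hp⟩ := ih m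
    refine ⟨fun t => if t ≤ k + 1 then p t else j, by simp [hp0], by simp, ?_⟩
    have hprefix :
        walkWeight B (fun t => if t ≤ k + 1 then p t else j) 0 (k + 1) = walkWeight B p 0 (k + 1) :=
      sum_congr rfl fun t ht => by
        have := (mem_Ico.1 ht).2
        simp [this.le, Nat.succ_le_of_lt this]
    rw [walkWeight_succ _ _ (Nat.zero_le _), hprefix, hp]
    simp only [hpk, le_refl, if_true, Nat.not_succ_le_self, if_false]
    exact hm.symm

theorem mpPow_le_mpStar {B : Fin n → Fin n → EReal}
    (htr : ∀ m ∈ Icc 1 n, mpTrace (mpPow B m) ≤ 0) (k : ℕ) (i j : Fin n) :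
    mpPow B k i j ≤ mpStar B i j := by
  induction k using Nat.strong_induction_on generalizing i j with
  | _ k ih =>
  rcases lt_or_ge k n with hk | hk
  · exact le_sup (f := fun k => mpPow B k i j) (mem_range.2 hk)
  obtain ⟨k, rfl⟩ := Nat.exists_eq_add_one.2 (i.pos.trans_le hk)
  obtain ⟨p, rfl, rfl, hp⟩ := exists_walkWeight_eq_mpPow B k i j
  obtain ⟨s, t, hst, htn, hpst⟩ := exists_lt_le_apply_eq p
  have hcycle : walkWeight B p s t ≤ 0 := calc
    walkWeight B p s t ≤ mpPow B (t - s) (p s) (p s) := hpst ▸ walkWeight_le_mpPow B p hst.le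
    _ ≤ mpTrace (mpPow B (t - s)) := le_sup (f := fun v => mpPow B (t - s) v v) (mem_univ _)
    _ ≤ 0 := htr _ (mem_Icc.2 ⟨by omega, by omega⟩)
  calc mpPow B (k + 1) (p 0) (p (k + 1))
      = walkWeight B p 0 s + walkWeight B p s t + walkWeight B p t (k + 1) := by
        rw [← hp, walkWeight_add B p (Nat.zero_le s) hst.le,
          walkWeight_add B p (by omega) (by omega)]
    _ ≤ walkWeight B p 0 s + 0 + walkWeight B p t (k + 1) := by gcongr
    _ ≤ mpPow B s (p 0) (p t) + mpPow B (k + 1 - t) (p t) (p (k + 1)) := by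
        rw [add_zero, ← hpst]
        exact add_le_add (walkWeight_le_mpPow B p (Nat.zero_le s))
          (hpst ▸ walkWeight_le_mpPow B p (by omega))
    _ ≤ mpPow B (s + (k + 1 - t)) (p 0) (p (k + 1)) := mpPow_apply_add_mpPow_apply_le B _ _ _ _ _
    _ ≤ mpStar B (p 0) (p (k + 1)) := ih _ (by omega) _ _

theorem add_mpStar_le {B : Fin n → Fin n → EReal}
    (htr : ∀ m ∈ Icc 1 n, mpTrace (mpPow B m) ≤ 0) (i j l : Fin n) :
    B i j + mpStar B j l ≤ mpStar B i l := by
  rw [mpStar, EReal.add_finset_sup]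
  refine Finset.sup_le fun k _ => ?_
  calc B i j + mpPow B k j l = mpPow B 1 i j + mpPow B k j l := by rw [mpPow_one]
    _ ≤ mpPow B (1 + k) i l := mpPow_apply_add_mpPow_apply_le B _ _ _ _ _
    _ ≤ mpStar B i l := mpPow_le_mpStar htr _ _ _

theorem add_mpMulVec_mpStar_le {B : Fin n → Fin n → EReal}
    (htr : ∀ m ∈ Icc 1 n, mpTrace (mpPow B m) ≤ 0) (u : Fin n → EReal) (i j : Fin n) :
    B i j + mpMulVec (mpStar B) u j ≤ mpMulVec (mpStar B) u i := by
  rw [mpMulVec, EReal.add_finset_sup]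
  refine Finset.sup_le fun l _ => ?_
  rw [← add_assoc]
  exact (add_le_add_left (add_mpStar_le htr i j l) _).trans
    (le_sup (f := fun l => mpStar B i l + u l) (mem_univ l))

theorem le_mpMulVec_mpStar (B : Fin n → Fin n → EReal) (u : Fin n → EReal) (i : Fin n) :
    u i ≤ mpMulVec (mpStar B) u i := calc
  u i = mpPow B 0 i i + u i := by simp [mpPow, mpId]
  _ ≤ mpStar B i i + u i := by
    gcongr
    exact le_sup (f := fun k => mpPow B k i i) (mem_range.2 i.pos)
  _ ≤ mpMulVec (mpStar B) u i := le_sup (f := fun l => mpStar B i l + u l) (mem_univ i)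

theorem mpMulVec_mpStar_ne_top {B : Fin n → Fin n → EReal} (hB : ∀ i j, B i j ≠ ⊤)
    {u : Fin n → EReal} (hu : ∀ i, u i ≠ ⊤) (i : Fin n) :
    mpMulVec (mpStar B) u i ≠ ⊤ := by
  refine ((Finset.sup_lt_iff bot_lt_top).2 fun l _ => EReal.add_lt_top ?_ (hu l)).ne
  exact ((Finset.sup_lt_iff bot_lt_top).2 fun k _ => (mpPow_ne_top hB k i l).lt_top).ne

/-- The paper's `x⁻ A x`. -/
noncomputable def mpQuadForm (A : Fin n → Fin n → EReal) (x : Fin n → EReal) : EReal :=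
  univ.sup fun i => univ.sup fun j => -x i + A i j + x j

theorem mpQuadForm_coe_le_coe_iff (A : Fin n → Fin n → EReal) (y : Fin n → ℝ) (c : ℝ) :
    mpQuadForm A (fun i => y i) ≤ c ↔ ∀ i j, A i j ≤ ((c + y i - y j : ℝ) : EReal) := by
  simp only [mpQuadForm, Finset.sup_le_iff, mem_univ, true_implies]
  refine forall₂_congr fun i j => ?_
  rw [add_comm (-(y i : EReal)), ← EReal.coe_neg, EReal.add_coe_add_coe_le_coe_iff, sub_neg_eq_add,
    add_sub_right_comm]

theorem mpPow_apply_le_of_forall_apply_le_add_sub {A : Fin n → Fin n → EReal} {y : Fin n → ℝ}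
    {c : ℝ} (h : ∀ i j, A i j ≤ ((c + y i - y j : ℝ) : EReal)) (k : ℕ) (i j : Fin n) :
    mpPow A k i j ≤ ((k * c + y i - y j : ℝ) : EReal) := by
  induction k generalizing j with
  | zero => by_cases hij : i = j <;> simp [mpPow, mpId, hij]
  | succ k ih =>
    change (univ.sup fun m => mpPow A k i m + A m j) ≤ _
    refine Finset.sup_le fun m _ => (add_le_add (ih m) (h m j)).trans_eq ?_
    rw [← EReal.coe_add]
    congr 1
    push_cast
    ring

theorem le_of_forall_apply_le_add_sub {A : Fin n → Fin n → EReal} {lam c : ℝ} {y : Fin n → ℝ}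
    (hex : ∃ k ∈ Icc 1 n, mpTrace (mpPow A k) = (((k : ℝ) * lam : ℝ) : EReal))
    (h : ∀ i j, A i j ≤ ((c + y i - y j : ℝ) : EReal)) : lam ≤ c := by
  obtain ⟨k, hk, htr⟩ := hex
  have hkc : mpTrace (mpPow A k) ≤ ((k * c : ℝ) : EReal) :=
    Finset.sup_le fun i _ => (mpPow_apply_le_of_forall_apply_le_add_sub h k i i).trans_eq (by simp)
  rw [htr, EReal.coe_le_coe_iff] at hkc
  have hk0 : (0 : ℝ) < k := by exact_mod_cast (mem_Icc.1 hk).1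
  exact le_of_mul_le_mul_left hkc hk0

theorem le_mpQuadForm {A : Fin n → Fin n → EReal} {lam : ℝ}
    (hex : ∃ k ∈ Icc 1 n, mpTrace (mpPow A k) = (((k : ℝ) * lam : ℝ) : EReal)) (y : Fin n → ℝ) :
    (lam : EReal) ≤ mpQuadForm A (fun i => y i) :=
  EReal.le_of_forall_lt_iff_le.1 fun z hz =>
    EReal.coe_le_coe_iff.2 <|
      le_of_forall_apply_le_add_sub hex ((mpQuadForm_coe_le_coe_iff A y z).1 hz.le)

theorem mpQuadForm_eq {A : Fin n → Fin n → EReal} {lam : ℝ}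
    (hex : ∃ k ∈ Icc 1 n, mpTrace (mpPow A k) = (((k : ℝ) * lam : ℝ) : EReal))
    {x : Fin n → EReal} (hx : ∀ i, x i ≠ ⊥ ∧ x i ≠ ⊤)
    (hsub : ∀ i j, A i j + ((-lam : ℝ) : EReal) + x j ≤ x i) :
    mpQuadForm A x = lam := by
  lift x to Fin n → ℝ using fun i => (hx i).symm
  refine le_antisymm ((mpQuadForm_coe_le_coe_iff A x lam).2 fun i j => ?_) (le_mpQuadForm hex x)
  refine ((EReal.add_coe_add_coe_le_coe_iff _ _ _ _).1 (hsub i j)).trans_eq ?_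
  congr 1
  ring

end MaxPlus

/-- Max-plus: if `lam` is the spectral radius of `A` (`lam` real), then for
every regular `u`, the vector `x = (lam⁻¹ A)* u` is regular and attains
`x⁻ A x = lam`; moreover `lam` is a lower bound of `y⁻ A y` over regular `y`,
so the minimum of the objective equals `lam`. -/
theorem stmt16 {n : ℕ} (A : Fin n → Fin n → EReal) (hA : ∀ i j, A i j ≠ ⊤) (lam : ℝ)
    (hub : ∀ k ∈ Finset.Icc 1 n, mpTrace (mpPow A k) ≤ (((k : ℝ) * lam : ℝ) : EReal))
    (hex : ∃ k ∈ Finset.Icc 1 n, mpTrace (mpPow A k) = (((k : ℝ) * lam : ℝ) : EReal))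
    (u : Fin n → ℝ) :
    (∀ i, mpMulVec (mpStar fun i j => A i j + ((-lam : ℝ) : EReal))
            (fun j => (u j : EReal)) i ≠ ⊥ ∧
          mpMulVec (mpStar fun i j => A i j + ((-lam : ℝ) : EReal))
            (fun j => (u j : EReal)) i ≠ ⊤) ∧
    ((Finset.univ.sup fun i => Finset.univ.sup fun j =>
        -(mpMulVec (mpStar fun i' j' => A i' j' + ((-lam : ℝ) : EReal))
            (fun j' => (u j' : EReal)) i) + A i j +
          mpMulVec (mpStar fun i' j' => A i' j' + ((-lam : ℝ) : EReal))
            (fun j' => (u j' : EReal)) j) = (lam : EReal)) ∧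
    (∀ y : Fin n → ℝ, (lam : EReal) ≤
      Finset.univ.sup fun i => Finset.univ.sup fun j =>
        (-(y i : EReal)) + A i j + (y j : EReal)) := by
  set B : Fin n → Fin n → EReal := fun i j => A i j + ((-lam : ℝ) : EReal)
  have hB : ∀ i j, B i j ≠ ⊤ := fun i j => (EReal.add_lt_top (hA i j) (EReal.coe_ne_top _)).ne
  have htrB : ∀ m ∈ Icc 1 n, mpTrace (mpPow B m) ≤ 0 := fun m hm => calc
    mpTrace (mpPow B m) = mpTrace (mpPow A m) + ((m * -lam : ℝ) : EReal) :=
      mpTrace_mpPow_add_const A (-lam) m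
    _ ≤ ((m * lam : ℝ) : EReal) + ((m * -lam : ℝ) : EReal) := by gcongr; exact hub m hm
    _ = 0 := by rw [← EReal.coe_add, mul_neg, add_neg_cancel, EReal.coe_zero]
  have hx : ∀ i, mpMulVec (mpStar B) (fun j => (u j : EReal)) i ≠ ⊥ ∧
      mpMulVec (mpStar B) (fun j => (u j : EReal)) i ≠ ⊤ := fun i =>
    ⟨ne_bot_of_le_ne_bot (EReal.coe_ne_bot (u i)) (le_mpMulVec_mpStar B (fun j => (u j : EReal)) i),
      mpMulVec_mpStar_ne_top hB (fun j => EReal.coe_ne_top _) i⟩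
  exact ⟨hx, mpQuadForm_eq hex hx (add_mpMulVec_mpStar_le htrB _), le_mpQuadForm hex⟩
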